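/- Suppose λ = 1 − β·n^{−α} with α ∈ [0,1), β > 0, λ ≥ 0, and β·n^{1−α} ≥ 2d. Then every stationary distribution π of the greedy full-access chain satisfies E_π[(λ − d·x_d)²] ≤ d·λ/n, where x_d = X_d/n. (Corollary 1.) -/

import Mathlib

open Finset

/-- `busy d X` is the number of busy servers in state `X`, where `X i`
(for `1 ≤ i ≤ d`) is the number of jobs being processed on `i` servers
simultaneously (coordinate `0` is unused). -/
def busy (d : ℕ) (X : Fin (d + 1) → ℕ) : ℕ :=
  ∑ i : Fin (d + 1), i.1 * X i

/-- The finite state space `S`: coordinate `0` is zero and at most `n` servers busy. -/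
def stateSpace (n d : ℕ) : Finset (Fin (d + 1) → ℕ) :=
  (Fintype.piFinset fun _ : Fin (d + 1) => Finset.range (n + 1)).filter
    fun X => busy d X ≤ n ∧ X 0 = 0

/-- Expectation of `g` under a measure `π` supported on the state space. -/
noncomputable def expec (n d : ℕ) (π g : (Fin (d + 1) → ℕ) → ℝ) : ℝ :=
  ∑ X ∈ stateSpace n d, π X * g X

/-- `π` is a probability distribution on the state space. -/
def IsProbOn (n d : ℕ) (π : (Fin (d + 1) → ℕ) → ℝ) : Prop :=
  (∀ X, 0 ≤ π X) ∧ (∑ X ∈ stateSpace n d, π X = 1) ∧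
    ∀ X, X ∉ stateSpace n d → π X = 0

/-- Total number of jobs `∑_{i=1}^d X_i` in state `X`. -/
def jobs (d : ℕ) (X : Fin (d + 1) → ℕ) : ℕ :=
  ∑ i : Fin (d + 1), if 0 < i.1 then X i else 0

/-- Number of jobs occupying fewer than `d` servers, `∑_{i=1}^{d-1} X_i`. -/
def jobsLow (d : ℕ) (X : Fin (d + 1) → ℕ) : ℕ :=
  ∑ i : Fin (d + 1), if 0 < i.1 ∧ i.1 < d then X i else 0

/-- Sampling probabilities `A_i(X)` for `0 ≤ i ≤ d`: for `i < d`, the hypergeometric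
probability `C(I,i)·C(B,k−i)/C(n,k)` that exactly `i` of the `k` uniformly sampled
servers are idle; for `i = d`, the probability `1 − ∑_{j<d} A_j(X)` that at least `d`
sampled servers are idle. -/
noncomputable def Asamp (n d k : ℕ) (X : Fin (d + 1) → ℕ) (i : ℕ) : ℝ :=
  if i < d then
    ((n - busy d X).choose i * (busy d X).choose (k - i) : ℝ) / (n.choose k : ℝ)
  else
    1 - ∑ j ∈ Finset.range d,
        ((n - busy d X).choose j * (busy d X).choose (k - j) : ℝ) / (n.choose k : ℝ)

/-- Generator of the greedy limited-access chain:
`G f(X) = nλ·∑_{i=1}^d A_i(X)·(f(X+e_i) − f(X)) + ∑_{i=1}^d i·X_i·(f(X−e_i) − f(X))`. -/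
noncomputable def Glim (n d k : ℕ) (lam : ℝ) (f : (Fin (d + 1) → ℕ) → ℝ)
    (X : Fin (d + 1) → ℕ) : ℝ :=
  (n : ℝ) * lam * ∑ i : Fin (d + 1),
      (if i.1 = 0 then 0 else Asamp n d k X i.1) * (f (X + Pi.single i 1) - f X) +
    ∑ i : Fin (d + 1), (i.1 * X i : ℝ) * (f (X - Pi.single i 1) - f X)

/-- `π` is a stationary distribution of the greedy limited-access chain. -/
def IsStationaryLim (n d k : ℕ) (lam : ℝ) (π : (Fin (d + 1) → ℕ) → ℝ) : Prop :=
  ∀ f : (Fin (d + 1) → ℕ) → ℝ, ∑ X ∈ stateSpace n d, π X * Glim n d k lam f X = 0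

/-- Generator of the greedy full-access chain (the case `k = n`):
`G f(X) = nλ·[1(I(X) ≥ d)·(f(X+e_d) − f(X)) + ∑_{j=1}^{d−1} 1(I(X) = j)·(f(X+e_j) − f(X))]
  + ∑_{i=1}^d i·X_i·(f(X−e_i) − f(X))`, where `I(X) = n − busy d X`. -/
noncomputable def Gfull (n d : ℕ) (lam : ℝ) (f : (Fin (d + 1) → ℕ) → ℝ)
    (X : Fin (d + 1) → ℕ) : ℝ :=
  (n : ℝ) * lam *
      ((if d ≤ n - busy d X then (1 : ℝ) else 0) *
          (f (X + Pi.single (Fin.last d) 1) - f X) +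
        ∑ j : Fin (d + 1),
          (if 0 < j.1 ∧ j.1 < d ∧ n - busy d X = j.1 then (1 : ℝ) else 0) *
            (f (X + Pi.single j 1) - f X)) +
    ∑ i : Fin (d + 1), (i.1 * X i : ℝ) * (f (X - Pi.single i 1) - f X)

/-- `π` is a stationary distribution of the greedy full-access chain. -/
def IsStationaryFull (n d : ℕ) (lam : ℝ) (π : (Fin (d + 1) → ℕ) → ℝ) : Prop :=
  ∀ f : (Fin (d + 1) → ℕ) → ℝ, ∑ X ∈ stateSpace n d, π X * Gfull n d lam f X = 0


def wtAux (d : ℕ) (X : Fin (d + 1) → ℕ) : ℕ :=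
  ∑ i : Fin (d + 1), if i.1 < d then i.1 * X i else 0

lemma busy_eq_wt (d : ℕ) (X : Fin (d + 1) → ℕ) :
    busy d X = wtAux d X + d * X (Fin.last d) := by
  unfold busy wtAux
  have h : ∀ i : Fin (d+1), i.1 * X i =
      (if i.1 < d then i.1 * X i else 0) + (if i = Fin.last d then d * X (Fin.last d) else 0) := by
    intro i
    by_cases hi : i.1 < d
    · have hne : i ≠ Fin.last d := by
        intro h; rw [h, Fin.val_last] at hi; omega
      simp [hi, hne]
    · have hv : i.1 = d := by omega
      have heq : i = Fin.last d := by
        apply Fin.ext; simp [Fin.val_last, hv]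
      rw [if_neg hi, if_pos heq, heq, Fin.val_last, zero_add]
  rw [Finset.sum_congr rfl (fun i _ => h i), Finset.sum_add_distrib]
  simp

lemma wt_add_single (d : ℕ) (X : Fin (d + 1) → ℕ) (j : Fin (d+1)) :
    wtAux d (X + Pi.single j 1) = wtAux d X + (if j.1 < d then j.1 else 0) := by
  unfold wtAux
  have h : ∀ i : Fin (d+1), (if i.1 < d then i.1 * (X i + (Pi.single j 1 : Fin (d+1) → ℕ) i) else 0) =
      (if i.1 < d then i.1 * X i else 0) +
      (if i = j then (if j.1 < d then j.1 else 0) else 0) := by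
    intro i
    by_cases hij : i = j
    · subst hij
      by_cases hi : i.1 < d <;> simp [hi, Pi.single_apply, mul_add]
    · simp [Pi.single_apply, hij]
  exact (Finset.sum_congr rfl (fun i _ => h i)).trans
    (by rw [Finset.sum_add_distrib]; simp)

lemma sub_add_single (d : ℕ) (X : Fin (d + 1) → ℕ) (j : Fin (d+1)) (hj : 1 ≤ X j) :
    (X - Pi.single j 1) + Pi.single j 1 = X := by
  funext i
  by_cases hij : i = j
  · subst hij; simp [Pi.single_apply]; omega
  · simp [Pi.single_apply, hij]

lemma wt_sub_single (d : ℕ) (X : Fin (d + 1) → ℕ) (j : Fin (d+1)) (hj : 1 ≤ X j) :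
    wtAux d (X - Pi.single j 1) + (if j.1 < d then j.1 else 0) = wtAux d X := by
  conv_rhs => rw [← sub_add_single d X j hj]
  rw [wt_add_single]

lemma busy_add_single (d : ℕ) (X : Fin (d + 1) → ℕ) (j : Fin (d+1)) :
    busy d (X + Pi.single j 1) = busy d X + j.1 := by
  unfold busy
  have h : ∀ i : Fin (d+1), i.1 * (X i + (Pi.single j 1 : Fin (d+1) → ℕ) i) =
      i.1 * X i + (if i = j then j.1 else 0) := by
    intro i
    by_cases hij : i = j
    · subst hij; simp [Pi.single_apply, mul_add]
    · simp [Pi.single_apply, hij]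
  exact (Finset.sum_congr rfl (fun i _ => h i)).trans
    (by rw [Finset.sum_add_distrib]; simp)

lemma apply_last_add (d : ℕ) (X : Fin (d + 1) → ℕ) (j : Fin (d+1)) :
    (X + (Pi.single j 1 : Fin (d+1) → ℕ)) (Fin.last d) = X (Fin.last d) + (if Fin.last d = j then 1 else 0) := by
  rw [Pi.add_apply, Pi.single_apply]

lemma apply_last_sub (d : ℕ) (X : Fin (d + 1) → ℕ) (j : Fin (d+1)) :
    (X - (Pi.single j 1 : Fin (d+1) → ℕ)) (Fin.last d) = X (Fin.last d) - (if Fin.last d = j then 1 else 0) := by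
  rw [Pi.sub_apply, Pi.single_apply]

lemma apply_sub (d : ℕ) (X : Fin (d + 1) → ℕ) (j i : Fin (d+1)) :
    (X - (Pi.single j 1 : Fin (d+1) → ℕ)) i = X i - (if i = j then 1 else 0) := by
  rw [Pi.sub_apply, Pi.single_apply]

lemma Gfull_xlast (n d : ℕ) (lam : ℝ) (X : Fin (d + 1) → ℕ) :
    Gfull n d lam (fun Y => (Y (Fin.last d) : ℝ)) X =
      (n : ℝ) * lam * (if d ≤ n - busy d X then (1:ℝ) else 0)
        - d * (X (Fin.last d) : ℝ) := by
  unfold Gfull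
  have hlast : ((X + (Pi.single (Fin.last d) 1 : Fin (d+1) → ℕ)) (Fin.last d) : ℝ)
      - (X (Fin.last d) : ℝ) = 1 := by
    rw [apply_last_add]
    simp
  have hlow : ∑ j : Fin (d + 1),
      (if 0 < j.1 ∧ j.1 < d ∧ n - busy d X = j.1 then (1 : ℝ) else 0) *
        (((X + (Pi.single j 1 : Fin (d+1) → ℕ)) (Fin.last d) : ℝ) - (X (Fin.last d) : ℝ)) = 0 := by
    apply Finset.sum_eq_zero
    intro j _
    by_cases hj : 0 < j.1 ∧ j.1 < d ∧ n - busy d X = j.1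
    · have hne : Fin.last d ≠ j := by
        intro h; rw [← h, Fin.val_last] at hj; omega
      rw [apply_last_add, if_neg hne]
      simp
    · rw [if_neg hj, zero_mul]
  have hdep : ∑ i : Fin (d + 1), (i.1 * X i : ℝ) *
      (((X - (Pi.single i 1 : Fin (d+1) → ℕ)) (Fin.last d) : ℝ) - (X (Fin.last d) : ℝ))
      = -(d * (X (Fin.last d) : ℝ)) := by
    rw [Finset.sum_eq_single (Fin.last d)]
    · by_cases h0 : X (Fin.last d) = 0
      · simp [h0]
      · rw [apply_last_sub, if_pos rfl, Fin.val_last]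
        rw [Nat.cast_sub (by omega : 1 ≤ X (Fin.last d))]
        push_cast
        ring
    · intro i _ hne
      rw [apply_last_sub, if_neg (fun h => hne h.symm)]
      simp
    · intro h; exact absurd (Finset.mem_univ _) h
  rw [hlow, hdep, hlast]
  ring

lemma Gfull_sq (n d : ℕ) (lam : ℝ) (X : Fin (d + 1) → ℕ) :
    Gfull n d lam (fun Y => ((n : ℝ) * lam - d * (Y (Fin.last d) : ℝ)) ^ 2) X =
      (n : ℝ) * lam * (if d ≤ n - busy d X then (1:ℝ) else 0) *
          (-(2*d) * ((n:ℝ)*lam - d*(X (Fin.last d):ℝ)) + d^2)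
        + d * (X (Fin.last d) : ℝ) *
          (2*d*((n:ℝ)*lam - d*(X (Fin.last d):ℝ)) + d^2) := by
  unfold Gfull
  have hlast : ((n : ℝ) * lam - d * (((X + (Pi.single (Fin.last d) 1 : Fin (d+1) → ℕ)) (Fin.last d) : ℝ))) ^ 2
      - ((n : ℝ) * lam - d * (X (Fin.last d) : ℝ)) ^ 2
      = -(2*d) * ((n:ℝ)*lam - d*(X (Fin.last d):ℝ)) + d^2 := by
    rw [apply_last_add, if_pos rfl]
    push_cast
    ring
  have hlow : ∑ j : Fin (d + 1),
      (if 0 < j.1 ∧ j.1 < d ∧ n - busy d X = j.1 then (1 : ℝ) else 0) *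
        (((n : ℝ) * lam - d * (((X + (Pi.single j 1 : Fin (d+1) → ℕ)) (Fin.last d) : ℝ))) ^ 2
          - ((n : ℝ) * lam - d * (X (Fin.last d) : ℝ)) ^ 2) = 0 := by
    apply Finset.sum_eq_zero
    intro j _
    by_cases hj : 0 < j.1 ∧ j.1 < d ∧ n - busy d X = j.1
    · have hne : Fin.last d ≠ j := by
        intro h; rw [← h, Fin.val_last] at hj; omega
      rw [apply_last_add, if_neg hne]
      simp
    · rw [if_neg hj, zero_mul]
  have hdep : ∑ i : Fin (d + 1), (i.1 * X i : ℝ) *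
      (((n : ℝ) * lam - d * (((X - (Pi.single i 1 : Fin (d+1) → ℕ)) (Fin.last d) : ℝ))) ^ 2
        - ((n : ℝ) * lam - d * (X (Fin.last d) : ℝ)) ^ 2)
      = d * (X (Fin.last d) : ℝ) *
          (2*d*((n:ℝ)*lam - d*(X (Fin.last d):ℝ)) + d^2) := by
    rw [Finset.sum_eq_single (Fin.last d)]
    · by_cases h0 : X (Fin.last d) = 0
      · simp [h0]
      · rw [apply_last_sub, if_pos rfl, Fin.val_last]
        rw [Nat.cast_sub (by omega : 1 ≤ X (Fin.last d))]
        push_cast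
        ring
    · intro i _ hne
      rw [apply_last_sub, if_neg (fun h => hne h.symm)]
      simp
    · intro h; exact absurd (Finset.mem_univ _) h
  rw [hlow, hdep, hlast]
  ring

lemma wt_cast (d : ℕ) (X : Fin (d + 1) → ℕ) :
    ((wtAux d X : ℕ) : ℝ) = ∑ i : Fin (d+1), (if i.1 < d then (i.1 : ℝ) * (X i) else 0) := by
  unfold wtAux
  rw [Nat.cast_sum]
  apply Finset.sum_congr rfl
  intro i _
  by_cases hi : i.1 < d <;> simp [hi]

lemma low_arrival_wt (n d : ℕ) (X : Fin (d + 1) → ℕ) (hbusy : busy d X ≤ n) (j : Fin (d+1))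
    (hj : 0 < j.1 ∧ j.1 < d ∧ n - busy d X = j.1) (hwt : wtAux d X ≤ n % d) :
    wtAux d X + j.1 = n % d := by
  obtain ⟨hj0, hjd, hjI⟩ := hj
  have hdpos : 0 < d := by omega
  have hn : n = wtAux d X + j.1 + d * X (Fin.last d) := by
    have := busy_eq_wt d X; omega
  have hmod : (wtAux d X + j.1) % d = n % d := by
    conv_rhs => rw [hn]
    rw [Nat.add_mul_mod_self_left]
  have hrd : n % d < d := Nat.mod_lt _ hdpos
  rcases Nat.lt_or_ge (wtAux d X + j.1) d with hc | hc
  · rw [Nat.mod_eq_of_lt hc] at hmod; exact hmod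
  · exfalso
    have h2 : wtAux d X + j.1 - d < d := by omega
    have h3 : (wtAux d X + j.1) % d = wtAux d X + j.1 - d := by
      rw [Nat.mod_eq_sub_mod hc, Nat.mod_eq_of_lt h2]
    omega

lemma wt_add_last (d : ℕ) (X : Fin (d + 1) → ℕ) :
    wtAux d (X + Pi.single (Fin.last d) 1) = wtAux d X := by
  rw [wt_add_single]
  simp [Fin.val_last]

/-- Case A: states with small low-work have zero generator value for the indicator. -/
lemma Gfull_ind_small (n d : ℕ) (lam : ℝ) (m : ℕ) (X : Fin (d + 1) → ℕ)
    (hbusy : busy d X ≤ n) (hwt : wtAux d X ≤ n % d) (hm : n % d < m) :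
    Gfull n d lam (fun Y => if m ≤ wtAux d Y then (1:ℝ) else 0) X = 0 := by
  unfold Gfull
  have hfX : (if m ≤ wtAux d X then (1:ℝ) else 0) = 0 := if_neg (by omega)
  have hlast : (if m ≤ wtAux d (X + Pi.single (Fin.last d) 1) then (1:ℝ) else 0)
      - (if m ≤ wtAux d X then (1:ℝ) else 0) = 0 := by
    rw [wt_add_last, sub_self]
  have hlow : ∑ j : Fin (d + 1),
      (if 0 < j.1 ∧ j.1 < d ∧ n - busy d X = j.1 then (1 : ℝ) else 0) *
        ((if m ≤ wtAux d (X + Pi.single j 1) then (1:ℝ) else 0)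
          - (if m ≤ wtAux d X then (1:ℝ) else 0)) = 0 := by
    apply Finset.sum_eq_zero
    intro j _
    by_cases hj : 0 < j.1 ∧ j.1 < d ∧ n - busy d X = j.1
    · have h1 : wtAux d X + j.1 = n % d := low_arrival_wt n d X hbusy j hj hwt
      have h2 : wtAux d (X + Pi.single j 1) = wtAux d X + j.1 := by
        rw [wt_add_single, if_pos hj.2.1]
      rw [h2, h1, hfX, if_neg (by omega : ¬ m ≤ n % d), sub_zero, mul_zero]
    · rw [if_neg hj, zero_mul]
  have hdep : ∑ i : Fin (d + 1), (i.1 * X i : ℝ) *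
      ((if m ≤ wtAux d (X - Pi.single i 1) then (1:ℝ) else 0)
        - (if m ≤ wtAux d X then (1:ℝ) else 0)) = 0 := by
    apply Finset.sum_eq_zero
    intro i _
    by_cases hXi : X i = 0
    · simp [hXi]
    · have h1 : wtAux d (X - Pi.single i 1) ≤ wtAux d X := by
        have := wt_sub_single d X i (by omega); omega
      rw [hfX, if_neg (by omega : ¬ m ≤ wtAux d (X - Pi.single i 1)), sub_zero, mul_zero]
  rw [hlast, hlow, hdep]
  ring

/-- Case B: states with `m ≤ wt` have nonpositive generator value for the indicator. -/
lemma Gfull_ind_big (n d : ℕ) (lam : ℝ) (hlam : 0 ≤ lam) (m : ℕ) (X : Fin (d + 1) → ℕ)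
    (hwt : m ≤ wtAux d X) :
    Gfull n d lam (fun Y => if m ≤ wtAux d Y then (1:ℝ) else 0) X ≤ 0 := by
  unfold Gfull
  have hfX : (if m ≤ wtAux d X then (1:ℝ) else 0) = 1 := if_pos hwt
  have hlast : (if m ≤ wtAux d (X + Pi.single (Fin.last d) 1) then (1:ℝ) else 0)
      - (if m ≤ wtAux d X then (1:ℝ) else 0) = 0 := by
    rw [wt_add_last, sub_self]
  have hlow : ∑ j : Fin (d + 1),
      (if 0 < j.1 ∧ j.1 < d ∧ n - busy d X = j.1 then (1 : ℝ) else 0) *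
        ((if m ≤ wtAux d (X + Pi.single j 1) then (1:ℝ) else 0)
          - (if m ≤ wtAux d X then (1:ℝ) else 0)) = 0 := by
    apply Finset.sum_eq_zero
    intro j _
    have h2 : wtAux d X ≤ wtAux d (X + Pi.single j 1) := by
      rw [wt_add_single]; omega
    rw [hfX, if_pos (by omega : m ≤ wtAux d (X + Pi.single j 1)), sub_self, mul_zero]
  rw [hlast, hlow, mul_zero, add_zero, mul_zero, zero_add]
  apply Finset.sum_nonpos
  intro i _
  apply mul_nonpos_of_nonneg_of_nonpos
  · positivity
  · dsimp only
    rw [hfX]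
    by_cases h : m ≤ wtAux d (X - Pi.single i 1) <;> simp [h]

/-- Case C: exact value at states with `wt = m`. -/
lemma Gfull_ind_eq (n d : ℕ) (lam : ℝ) (m : ℕ) (X : Fin (d + 1) → ℕ)
    (hwt : wtAux d X = m) (hm : 1 ≤ m) :
    Gfull n d lam (fun Y => if m ≤ wtAux d Y then (1:ℝ) else 0) X = -(m : ℝ) := by
  unfold Gfull
  have hfX : (if m ≤ wtAux d X then (1:ℝ) else 0) = 1 := if_pos (by omega)
  have hlast : (if m ≤ wtAux d (X + Pi.single (Fin.last d) 1) then (1:ℝ) else 0)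
      - (if m ≤ wtAux d X then (1:ℝ) else 0) = 0 := by
    rw [wt_add_last, sub_self]
  have hlow : ∑ j : Fin (d + 1),
      (if 0 < j.1 ∧ j.1 < d ∧ n - busy d X = j.1 then (1 : ℝ) else 0) *
        ((if m ≤ wtAux d (X + Pi.single j 1) then (1:ℝ) else 0)
          - (if m ≤ wtAux d X then (1:ℝ) else 0)) = 0 := by
    apply Finset.sum_eq_zero
    intro j _
    have h2 : wtAux d X ≤ wtAux d (X + Pi.single j 1) := by
      rw [wt_add_single]; omega
    rw [hfX, if_pos (by omega : m ≤ wtAux d (X + Pi.single j 1)), sub_self, mul_zero]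
  have hdep : ∑ i : Fin (d + 1), (i.1 * X i : ℝ) *
      ((if m ≤ wtAux d (X - Pi.single i 1) then (1:ℝ) else 0)
        - (if m ≤ wtAux d X then (1:ℝ) else 0)) = -(m : ℝ) := by
    have hterm : ∀ i : Fin (d + 1), (i.1 * X i : ℝ) *
        ((if m ≤ wtAux d (X - Pi.single i 1) then (1:ℝ) else 0)
          - (if m ≤ wtAux d X then (1:ℝ) else 0))
        = -(if i.1 < d then (i.1 : ℝ) * (X i) else 0) := by
      intro i
      by_cases hXi : X i = 0
      · simp [hXi]
      · by_cases hid : i.1 < d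
        · by_cases hi0 : i.1 = 0
          · simp [hi0]
          · have h1 : wtAux d (X - Pi.single i 1) + i.1 = m := by
              have := wt_sub_single d X i (by omega : 1 ≤ X i)
              rw [if_pos hid] at this; omega
            rw [hfX, if_neg (by omega : ¬ m ≤ wtAux d (X - Pi.single i 1)), if_pos hid]
            push_cast
            ring
        · have h1 : wtAux d (X - Pi.single i 1) = m := by
            have := wt_sub_single d X i (by omega : 1 ≤ X i)
            rw [if_neg hid] at this; omega
          rw [hfX, h1, if_pos le_rfl, if_neg hid, sub_self, mul_zero, neg_zero]
    rw [Finset.sum_congr rfl (fun i _ => hterm i), Finset.sum_neg_distrib]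
    rw [← wt_cast, hwt]
  rw [hlast, hlow, hdep]
  ring

/-- Support lemma: any stationary distribution vanishes on states with `wt > n % d`. -/
lemma support_wt (n d : ℕ) (hd : 1 ≤ d) (lam : ℝ) (hlam : 0 ≤ lam)
    (π : (Fin (d + 1) → ℕ) → ℝ) (hπ0 : ∀ X, 0 ≤ π X)
    (hstat : IsStationaryFull n d lam π) :
    ∀ X ∈ stateSpace n d, n % d < wtAux d X → π X = 0 := by
  suffices H : ∀ m : ℕ, ∀ X ∈ stateSpace n d, wtAux d X = m → n % d < m → π X = 0 by
    exact fun X hX h => H _ X hX rfl h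
  intro m
  induction m using Nat.strong_induction_on with
  | _ m IH =>
    intro X0 hX0 hwt0 hm
    have hs := hstat (fun Y => if m ≤ wtAux d Y then (1:ℝ) else 0)
    have hterm : ∀ X ∈ stateSpace n d,
        π X * Gfull n d lam (fun Y => if m ≤ wtAux d Y then (1:ℝ) else 0) X ≤ 0 := by
      intro X hX
      have hbusy : busy d X ≤ n := ((Finset.mem_filter.mp hX).2).1
      rcases le_or_gt (wtAux d X) (n % d) with hle | hgt
      · rw [Gfull_ind_small n d lam m X hbusy hle hm, mul_zero]
      · rcases lt_or_ge (wtAux d X) m with hlt | hge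
        · rw [IH (wtAux d X) hlt X hX rfl hgt, zero_mul]
        · exact mul_nonpos_of_nonneg_of_nonpos (hπ0 X) (Gfull_ind_big n d lam hlam m X hge)
    have hzero := (Finset.sum_eq_zero_iff_of_nonpos hterm).mp hs X0 hX0
    rw [Gfull_ind_eq n d lam m X0 hwt0 (by omega)] at hzero
    have hmne : (m : ℝ) ≠ 0 := by
      have : (0:ℝ) < (m:ℝ) := by exact_mod_cast (by omega : 0 < m)
      exact ne_of_gt this
    rcases mul_eq_zero.mp hzero with h | h
    · exact h
    · exact absurd h (by simpa using hmne)


/-- Corollary 1: if `λ = 1 − β·n^{−α} ≥ 0` with `α ∈ [0,1)`, `β > 0` and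
`β·n^{1−α} ≥ 2d`, then every stationary distribution `π` of the greedy full-access chain
satisfies `E[(λ − d·x_d)²] ≤ d·λ/n`. -/
theorem stmt5 (n d : ℕ) (hn : 1 ≤ n) (hd : 1 ≤ d) (hdn : d ≤ n) (α β lam : ℝ)
    (hα0 : 0 ≤ α) (hα1 : α < 1) (hβ : 0 < β)
    (hlam : lam = 1 - β * (n : ℝ) ^ (-α)) (hlarge : 2 * d ≤ β * (n : ℝ) ^ (1 - α))
    (hlam0 : 0 ≤ lam) (hlam1 : lam ≤ 1) (π : (Fin (d + 1) → ℕ) → ℝ)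
    (hprob : IsProbOn n d π) (hstat : IsStationaryFull n d lam π) :
    expec n d π (fun X => (lam - d * (X (Fin.last d) : ℝ) / n) ^ 2) ≤ d * lam / n := by
  obtain ⟨hπ0, hπ1, hπsupp⟩ := hprob
  have hn0 : (0:ℝ) < (n:ℝ) := by exact_mod_cast hn
  have hd0 : (0:ℝ) < (d:ℝ) := by exact_mod_cast hd
  have hnl0 : 0 ≤ (n:ℝ) * lam := mul_nonneg (le_of_lt hn0) hlam0
  -- nλ ≤ n - 2d
  have hnlam : (n:ℝ) * lam ≤ (n:ℝ) - 2 * d := by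
    have hr : (n:ℝ) * (n:ℝ) ^ (-α) = (n:ℝ) ^ (1 - α) := by
      rw [sub_eq_add_neg, Real.rpow_add hn0, Real.rpow_one]
    have he : (n:ℝ) * (1 - β * (n:ℝ) ^ (-α)) = (n:ℝ) - β * ((n:ℝ) * (n:ℝ) ^ (-α)) := by
      ring
    rw [hlam, he, hr]
    linarith
  -- abbreviations (inline expressions)
  set S := stateSpace n d with hS
  -- key sums
  set A : ℝ := ∑ X ∈ S, π X * (if d ≤ n - busy d X then (1:ℝ) else 0) with hA
  set C : ℝ := ∑ X ∈ S, π X * ((d:ℝ) * (X (Fin.last d) : ℝ)) with hC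
  set K : ℝ := ∑ X ∈ S, π X * (((n:ℝ)*lam - d*(X (Fin.last d):ℝ)) *
      ((n:ℝ)*lam * (if d ≤ n - busy d X then (1:ℝ) else 0) - d*(X (Fin.last d):ℝ))) with hK
  -- first stationarity identity
  have hE1 : (n:ℝ)*lam * A - C = 0 := by
    have h1 := hstat (fun Y => (Y (Fin.last d) : ℝ))
    have h2 : ∑ X ∈ S, π X * Gfull n d lam (fun Y => (Y (Fin.last d) : ℝ)) X
        = ∑ X ∈ S, ((n:ℝ)*lam * (π X * (if d ≤ n - busy d X then (1:ℝ) else 0))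
            - π X * ((d:ℝ) * (X (Fin.last d) : ℝ))) := by
      apply Finset.sum_congr rfl
      intro X _
      rw [Gfull_xlast]
      ring
    rw [h2, Finset.sum_sub_distrib, ← Finset.mul_sum] at h1
    rw [hA, hC]
    exact h1
  -- second stationarity identity
  have hE2 : (-(2*(d:ℝ))) * K + (2*(d:ℝ)^2*((n:ℝ)*lam)) * A + (-(d:ℝ)^2) * ((n:ℝ)*lam * A - C) = 0 := by
    have h1 := hstat (fun Y => ((n : ℝ) * lam - d * (Y (Fin.last d) : ℝ)) ^ 2)
    have h2 : ∑ X ∈ S, π X * Gfull n d lam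
          (fun Y => ((n : ℝ) * lam - d * (Y (Fin.last d) : ℝ)) ^ 2) X
        = ∑ X ∈ S, ((-(2*(d:ℝ))) * (π X * (((n:ℝ)*lam - d*(X (Fin.last d):ℝ)) *
              ((n:ℝ)*lam * (if d ≤ n - busy d X then (1:ℝ) else 0) - d*(X (Fin.last d):ℝ))))
            + (2*(d:ℝ)^2*((n:ℝ)*lam)) * (π X * (if d ≤ n - busy d X then (1:ℝ) else 0))
            + (-(d:ℝ)^2) * ((n:ℝ)*lam * (π X * (if d ≤ n - busy d X then (1:ℝ) else 0))
                - π X * ((d:ℝ) * (X (Fin.last d) : ℝ)))) := by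
      apply Finset.sum_congr rfl
      intro X _
      rw [Gfull_sq]
      ring
    rw [h2] at h1
    rw [Finset.sum_add_distrib, Finset.sum_add_distrib, ← Finset.mul_sum, ← Finset.mul_sum,
      ← Finset.mul_sum, Finset.sum_sub_distrib, ← Finset.mul_sum] at h1
    rw [hA, hC, hK]
    exact h1
  -- solve for K
  have hKval : K = (d:ℝ) * ((n:ℝ)*lam) * A := by
    rw [hE1] at hE2
    have h1 : (2*(d:ℝ)) * K = (2*(d:ℝ)) * ((d:ℝ) * ((n:ℝ)*lam) * A) := by
      linear_combination -hE2
    exact mul_left_cancel₀ (by positivity) h1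
  -- nonpositive correction term
  have hNonpos : ∑ X ∈ S, π X * ((n:ℝ)*lam * (((n:ℝ)*lam - d*(X (Fin.last d):ℝ)) *
      (1 - (if d ≤ n - busy d X then (1:ℝ) else 0)))) ≤ 0 := by
    apply Finset.sum_nonpos
    intro X hX
    by_cases hP : d ≤ n - busy d X
    · rw [if_pos hP]
      simp
    · by_cases hπX : π X = 0
      · rw [hπX, zero_mul]
      · have hbusy : busy d X ≤ n := ((Finset.mem_filter.mp hX).2).1
        have hwt : wtAux d X ≤ n % d := by
          by_contra hc
          exact hπX (support_wt n d hd lam hlam0 π hπ0 hstat X hX (by omega))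
        have hrd : n % d < d := Nat.mod_lt _ (by omega)
        have hxd : n ≤ d * X (Fin.last d) + 2*d := by
          have hbw := busy_eq_wt d X
          omega
        have hcast : (n:ℝ) ≤ (d:ℝ) * (X (Fin.last d):ℝ) + 2*(d:ℝ) := by
          exact_mod_cast hxd
        have hhle : (n:ℝ)*lam - (d:ℝ)*(X (Fin.last d):ℝ) ≤ 0 := by linarith
        rw [if_neg hP]
        apply mul_nonpos_of_nonneg_of_nonpos (hπ0 X)
        apply mul_nonpos_of_nonneg_of_nonpos hnl0
        apply mul_nonpos_of_nonpos_of_nonneg hhle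
        norm_num
  -- main bound on second moment
  have hH2 : ∑ X ∈ S, π X * ((n:ℝ)*lam - d*(X (Fin.last d):ℝ))^2 ≤ (d:ℝ) * ((n:ℝ)*lam) := by
    have hsplit : ∑ X ∈ S, π X * ((n:ℝ)*lam - d*(X (Fin.last d):ℝ))^2
        = K + ∑ X ∈ S, π X * ((n:ℝ)*lam * (((n:ℝ)*lam - d*(X (Fin.last d):ℝ)) *
            (1 - (if d ≤ n - busy d X then (1:ℝ) else 0)))) := by
      rw [hK, ← Finset.sum_add_distrib]
      apply Finset.sum_congr rfl
      intro X _
      ring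
    have hA1 : A ≤ 1 := by
      have hle : A ≤ ∑ X ∈ S, π X := by
        rw [hA]
        apply Finset.sum_le_sum
        intro X _
        by_cases hP : d ≤ n - busy d X
        · rw [if_pos hP, mul_one]
        · rw [if_neg hP, mul_zero]; exact hπ0 X
      rw [hπ1] at hle
      exact hle
    have hfinal : (d:ℝ) * ((n:ℝ)*lam) * A ≤ (d:ℝ) * ((n:ℝ)*lam) := by
      nlinarith [mul_nonneg (le_of_lt hd0) hnl0]
    rw [hsplit, hKval]
    linarith
  -- conversion to the target
  unfold expec
  have hptw : ∀ X : Fin (d+1) → ℕ, π X * (lam - (d:ℝ) * (X (Fin.last d):ℝ) / n) ^ 2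
      = (π X * ((n:ℝ)*lam - d*(X (Fin.last d):ℝ))^2) * (1/(n:ℝ))^2 := by
    intro X
    have hne : (n:ℝ) ≠ 0 := ne_of_gt hn0
    have h1 : lam - (d:ℝ) * (X (Fin.last d):ℝ) / n
        = ((n:ℝ)*lam - (d:ℝ)*(X (Fin.last d):ℝ)) * (1/(n:ℝ)) := by
      field_simp
    rw [h1, mul_pow]
    ring
  rw [Finset.sum_congr rfl (fun X _ => hptw X), ← Finset.sum_mul]
  have hle : (∑ X ∈ S, π X * ((n:ℝ)*lam - d*(X (Fin.last d):ℝ))^2) * (1/(n:ℝ))^2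
      ≤ ((d:ℝ) * ((n:ℝ)*lam)) * (1/(n:ℝ))^2 := by
    apply mul_le_mul_of_nonneg_right hH2
    positivity
  have heq : ((d:ℝ) * ((n:ℝ)*lam)) * (1/(n:ℝ))^2 = (d:ℝ) * lam / n := by
    field_simp
  rw [heq] at hle
  exact hle
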